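/- arXiv:1803.05392 — 4 statements merged into one kernel-verified Lean document; each statement's English description precedes it below -/
import Mathlib

section
/- If player i selects actions in information set I according to regret matching for T iterations, then the average immediate counterfactual regret at I satisfies R_{i,imm}^T(I) ≤ Δ_I √|A(I)| / √T, where Δ_I is the range of player i's utilities over leaves reachable from I. -/
/-!
Blackwell's potential argument. Let `Φ_t = ∑_a ((R_t(a))⁺)²`. Regret matching plays the
positive regrets normalised, so the positive-regret vector is orthogonal to the next regret
increment `r_t`. Since `(x + r)⁺ ≤ |x⁺ + r|`, this gives `Φ_{t+1} ≤ Φ_t + ‖r_t‖² ≤ Φ_t + |A| Δ²`,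
hence `Φ_T ≤ T |A| Δ²`, and `max_a R_T(a) ≤ √Φ_T ≤ Δ √|A| √T`.
-/

namespace RegretMatching

variable {ι : Type*} (s : Finset ι)

noncomputable def strategy (R : ι → ℝ) (a : ι) : ℝ :=
  if 0 < ∑ a' ∈ s, max 0 (R a') then max 0 (R a) / ∑ a' ∈ s, max 0 (R a')
  else 1 / (s.card : ℝ)

theorem sum_posPart_mul_sub_strategy_eq_zero (R v : ι → ℝ) :
    ∑ a ∈ s, max 0 (R a) * (v a - ∑ a' ∈ s, strategy s R a' * v a') = 0 := by
  set S := ∑ a' ∈ s, max 0 (R a')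
  by_cases hS : 0 < S
  · have hvalue : ∑ a' ∈ s, strategy s R a' * v a' = (∑ a ∈ s, max 0 (R a) * v a) / S := by
      rw [Finset.sum_div]
      exact Finset.sum_congr rfl fun a _ => by
        rw [strategy, if_pos hS, div_mul_eq_mul_div]
    simp only [mul_sub, Finset.sum_sub_distrib, hvalue, ← Finset.sum_mul]
    field_simp
    ring
  · have hzero : ∀ a ∈ s, max 0 (R a) = 0 :=
      (Finset.sum_eq_zero_iff_of_nonneg fun a _ => le_max_left 0 (R a)).mp
        (le_antisymm (not_lt.mp hS) (Finset.sum_nonneg fun a _ => le_max_left _ _))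
    exact Finset.sum_eq_zero fun a ha => by rw [hzero a ha, zero_mul]

theorem sum_sq_posPart_add_le {x r : ι → ℝ} (horth : ∑ a ∈ s, max 0 (x a) * r a = 0) :
    ∑ a ∈ s, max 0 (x a + r a) ^ 2 ≤ ∑ a ∈ s, max 0 (x a) ^ 2 + ∑ a ∈ s, r a ^ 2 := by
  have hstep : ∀ a, max 0 (x a + r a) ^ 2 ≤ (max 0 (x a) + r a) ^ 2 := fun a => by
    have : max 0 (x a + r a) ≤ |max 0 (x a) + r a| :=
      max_le (abs_nonneg _) ((add_le_add_left (le_max_right _ _) _).trans (le_abs_self _))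
    simpa only [sq_abs] using pow_le_pow_left₀ (le_max_left _ _) this 2
  calc ∑ a ∈ s, max 0 (x a + r a) ^ 2
      ≤ ∑ a ∈ s, (max 0 (x a) + r a) ^ 2 := Finset.sum_le_sum fun a _ => hstep a
    _ = ∑ a ∈ s, max 0 (x a) ^ 2 + 2 * ∑ a ∈ s, max 0 (x a) * r a + ∑ a ∈ s, r a ^ 2 := by
      simp only [add_sq, Finset.sum_add_distrib, Finset.mul_sum, mul_assoc]
    _ = ∑ a ∈ s, max 0 (x a) ^ 2 + ∑ a ∈ s, r a ^ 2 := by rw [horth]; ring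

theorem sum_sq_posPart_le {R r : ℕ → ι → ℝ} {Δ : ℝ} (h0 : ∀ a ∈ s, R 0 a = 0)
    (hsucc : ∀ t, ∀ a ∈ s, R (t + 1) a = R t a + r t a)
    (horth : ∀ t, ∑ a ∈ s, max 0 (R t a) * r t a = 0)
    (hbound : ∀ t, ∀ a ∈ s, |r t a| ≤ Δ) (t : ℕ) :
    ∑ a ∈ s, max 0 (R t a) ^ 2 ≤ t * (s.card * Δ ^ 2) := by
  induction t with
  | zero => simp [Finset.sum_congr rfl fun a ha => congrArg (fun x => max 0 x ^ 2) (h0 a ha)]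
  | succ t ih =>
    have hr : ∑ a ∈ s, r t a ^ 2 ≤ s.card * Δ ^ 2 := by
      simpa using Finset.sum_le_sum fun a ha =>
        sq_le_sq' (abs_le.mp (hbound t a ha)).1 (abs_le.mp (hbound t a ha)).2
    calc ∑ a ∈ s, max 0 (R (t + 1) a) ^ 2
        = ∑ a ∈ s, max 0 (R t a + r t a) ^ 2 :=
          Finset.sum_congr rfl fun a ha => by rw [hsucc t a ha]
      _ ≤ ∑ a ∈ s, max 0 (R t a) ^ 2 + ∑ a ∈ s, r t a ^ 2 := sum_sq_posPart_add_le s (horth t)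
      _ ≤ t * (s.card * Δ ^ 2) + s.card * Δ ^ 2 := add_le_add ih hr
      _ = (t + 1 : ℕ) * (s.card * Δ ^ 2) := by push_cast; ring

theorem le_sqrt_sum_sq_posPart {R : ι → ℝ} {a : ι} (ha : a ∈ s) :
    R a ≤ √(∑ a' ∈ s, max 0 (R a') ^ 2) :=
  calc R a ≤ max 0 (R a) := le_max_right _ _
    _ = √(max 0 (R a) ^ 2) := (Real.sqrt_sq (le_max_left _ _)).symm
    _ ≤ √(∑ a' ∈ s, max 0 (R a') ^ 2) :=
      Real.sqrt_le_sqrt (Finset.single_le_sum (fun a' _ => sq_nonneg (max 0 (R a'))) ha)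

end RegretMatching

theorem one_div_mul_sqrt_mul_mul_sq (T : ℝ) {n Δ : ℝ} (hn : 0 ≤ n) (hΔ : 0 ≤ Δ) :
    1 / T * √(T * (n * Δ ^ 2)) = Δ * √n / √T := by
  rw [Real.sqrt_mul' T (by positivity), Real.sqrt_mul hn, Real.sqrt_sq hΔ, ← mul_assoc,
    one_div_mul_eq_div, Real.sqrt_div_self']
  ring

theorem stmt2_general {A : Type*} (Acts : Finset A) (hA : Acts.Nonempty)
    (Δ : ℝ) (hΔ : 0 ≤ Δ)
    (T : ℕ)
    (v : ℕ → A → ℝ)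
    (b : ℕ → A → ℝ) (R : ℕ → A → ℝ)
    (hR0 : ∀ a, R 0 a = 0)
    (hRsucc : ∀ t a, a ∈ Acts →
      R (t + 1) a = R t a + (v t a - ∑ a' ∈ Acts, b t a' * v t a'))
    (hrm : ∀ t a, a ∈ Acts → b t a =
      if 0 < ∑ a' ∈ Acts, max 0 (R t a')
      then max 0 (R t a) / ∑ a' ∈ Acts, max 0 (R t a')
      else 1 / (Acts.card : ℝ))
    (hv : ∀ t a, a ∈ Acts → |v t a - ∑ a' ∈ Acts, b t a' * v t a'| ≤ Δ) :
    (1 / (T : ℝ)) * ((Acts.sup' hA fun a => R T a))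
      ≤ Δ * Real.sqrt (Acts.card) / Real.sqrt T := by
  have hplay : ∀ t, ∑ a' ∈ Acts, b t a' * v t a'
      = ∑ a' ∈ Acts, RegretMatching.strategy Acts (R t) a' * v t a' := fun t =>
    Finset.sum_congr rfl fun a ha => by rw [hrm t a ha, RegretMatching.strategy]
  have hpotential := RegretMatching.sum_sq_posPart_le Acts (fun a _ => hR0 a) hRsucc
    (fun t => by simpa only [hplay] using
      RegretMatching.sum_posPart_mul_sub_strategy_eq_zero Acts (R t) (v t)) hv T
  obtain ⟨a, ha, hsup⟩ := Acts.exists_mem_eq_sup' hA fun a => R T a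
  rw [hsup, ← one_div_mul_sqrt_mul_mul_sq T Acts.card.cast_nonneg hΔ]
  gcongr
  exact (RegretMatching.le_sqrt_sum_sq_posPart Acts ha).trans (Real.sqrt_le_sqrt hpotential)

theorem stmt2 {A : Type*} (Acts : Finset A) (hA : Acts.Nonempty)
    (Δ : ℝ) (hΔ : 0 ≤ Δ)
    (T : ℕ) (hT : 0 < T)
    (v : ℕ → A → ℝ)
    (b : ℕ → A → ℝ) (R : ℕ → A → ℝ)
    (hR0 : ∀ a, R 0 a = 0)
    (hRsucc : ∀ t a, a ∈ Acts →
      R (t + 1) a = R t a + (v t a - ∑ a' ∈ Acts, b t a' * v t a'))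
    (hrm : ∀ t a, a ∈ Acts → b t a =
      if 0 < ∑ a' ∈ Acts, max 0 (R t a')
      then max 0 (R t a) / ∑ a' ∈ Acts, max 0 (R t a')
      else 1 / (Acts.card : ℝ))
    (hv : ∀ t a, a ∈ Acts → |v t a - ∑ a' ∈ Acts, b t a' * v t a'| ≤ Δ) :
    (1 / (T : ℝ)) * ((Acts.sup' hA fun a => R T a))
      ≤ Δ * Real.sqrt (Acts.card) / Real.sqrt T :=
  stmt2_general Acts hA Δ hΔ T v b R hR0 hRsucc hrm hv
end

section
/- In a two-player zero-sum game, if a strategy profile (b̄_1, b̄_2) satisfies, for each player i, that the average external regret of i over the T iterations that produced b̄ is less than ε (equivalently, for each i: max_{b_i'} u_i(b_i', b̄_{-i}) − (1/T) Σ_t u_i(b^t) < ε with b̄ the average of the b^t), then (b̄_1, b̄_2) is a 2ε-Nash equilibrium. -/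
/-!
STATEMENT 4: in a two-player zero-sum game (`u` is player 1's expected utility,
player 2's is `-u`), if the average external regret of each player over the T
iterations producing the average profile (x̄, ȳ) is below ε, then (x̄, ȳ) is a
2ε-Nash equilibrium.  `hbilin1`/`hbilin2` express bilinearity: the utility of the
averaged strategy against a fixed opponent strategy is the average of utilities. -/
theorem stmt4 {B1 B2 : Type*} (u : B1 → B2 → ℝ) (ε : ℝ)
    (T : ℕ) (hT : 0 < T) (x : ℕ → B1) (y : ℕ → B2) (xb : B1) (yb : B2)
    (hbilin1 : ∀ y' : B2, u xb y' = (1 / (T : ℝ)) * ∑ t ∈ Finset.range T, u (x t) y')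
    (hbilin2 : ∀ x' : B1, u x' yb = (1 / (T : ℝ)) * ∑ t ∈ Finset.range T, u x' (y t))
    -- average external regret of player 1 below ε
    (hreg1 : ∀ x' : B1,
      (1 / (T : ℝ)) * ∑ t ∈ Finset.range T, (u x' (y t) - u (x t) (y t)) < ε)
    -- average external regret of player 2 (whose utility is -u) below ε
    (hreg2 : ∀ y' : B2,
      (1 / (T : ℝ)) * ∑ t ∈ Finset.range T, (-(u (x t) y') - -(u (x t) (y t))) < ε) :
    -- (x̄, ȳ) is a 2ε-Nash equilibrium
    (∀ x' : B1, u xb yb ≥ u x' yb - 2 * ε) ∧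
    (∀ y' : B2, -(u xb yb) ≥ -(u xb y') - 2 * ε) := by
  set v : ℝ := (1 / (T : ℝ)) * ∑ t ∈ Finset.range T, u (x t) (y t) with hv
  have h1 : ∀ x' : B1, u x' yb - v < ε := by
    intro x'
    have := hreg1 x'
    rw [Finset.sum_sub_distrib, mul_sub] at this
    rwa [hbilin2 x']
  have h2 : ∀ y' : B2, v - u xb y' < ε := by
    intro y'
    have := hreg2 y'
    simp only [sub_neg_eq_add] at this
    rw [Finset.sum_add_distrib, mul_add, Finset.sum_neg_distrib, mul_neg] at this
    rw [hbilin1 y']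
    linarith
  constructor
  · intro x'
    have := h1 x'
    have := h2 yb
    linarith
  · intro y'
    have := h1 xb
    have := h2 y'
    linarith
end

section
/- Suppose in each information set I of player i the cumulative counterfactual regret over iterations 1..T satisfies: increments are bounded by Δ in absolute value during the first T_lim iterations (arbitrary play), and from iteration T_lim+1 to T regret matching⁺ is used so the regret accumulated during those iterations is at most Δ√|A(I)|·√T. Then max_{a ∈ A(I)} R_i^T(I,a) ≤ Δ·T_lim + Δ√|A(I)|·√T, and consequently the average external regret satisfies R_i^T/T ≤ (1/T)(Δ|I_i|√(A_max)·√T + Δ|I_i|·T_lim). -/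
/-! Splitting the cumulative regret at `T_lim`, the warm-up part is at most `Δ·T_lim` and the
rest is controlled by the regret-matching⁺ guarantee; the bound survives taking the maximum over
actions and the positive part, and summing it over the `|I_i|` information sets bounds `R_i^T`. -/

open Finset

theorem sum_range_le_of_warmup_add_sum_Ico {f : ℕ → ℝ} {Δ B : ℝ} {T₀ T : ℕ} (hΔ : 0 ≤ Δ)
    (hwarm : ∀ t < T₀, f t ≤ Δ) (hconv : ∑ t ∈ Ico T₀ T, f t ≤ B) :
    ∑ t ∈ range T, f t ≤ Δ * T₀ + B := by
  have warm_sum : ∀ n ≤ T₀, ∑ t ∈ range n, f t ≤ Δ * n := fun n hn => by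
    simpa [mul_comm] using
      sum_le_sum (s := range n) fun t ht => hwarm t (by rw [mem_range] at ht; omega)
  rcases le_total T₀ T with h | h
  · rw [← sum_range_add_sum_Ico _ h]
    linarith [warm_sum T₀ le_rfl]
  · rw [Ico_eq_empty_of_le h, sum_empty] at hconv
    have : Δ * T ≤ Δ * T₀ := by gcongr
    linarith [warm_sum T h]

theorem stmt11_general {Ii A : Type*} [Fintype Ii]
    (act : Ii → Finset A) (hact : ∀ I, (act I).Nonempty)
    (Δ : ℝ) (hΔ : 0 ≤ Δ) (Amax : ℕ) (hAmax : ∀ I, (act I).card ≤ Amax)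
    (T Tlim : ℕ)
    (r : ℕ → Ii → A → ℝ)
    (hwarm : ∀ t < Tlim, ∀ I, ∀ a ∈ act I, |r t I a| ≤ Δ)
    (hconv : ∀ I, ∀ a ∈ act I,
      ∑ t ∈ Finset.Ico Tlim T, r t I a ≤ Δ * Real.sqrt (act I).card * Real.sqrt T)
    (Rext : ℝ)
    (hext : Rext ≤ ∑ I : Ii,
      max 0 ((act I).sup' (hact I) fun a => ∑ t ∈ Finset.range T, r t I a)) :
    (∀ I, ∀ a ∈ act I,
      ∑ t ∈ Finset.range T, r t I a ≤ Δ * Tlim + Δ * Real.sqrt (act I).card * Real.sqrt T) ∧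
    Rext / T ≤ (1 / (T : ℝ)) *
      (Δ * (Fintype.card Ii) * Real.sqrt Amax * Real.sqrt T
        + Δ * (Fintype.card Ii) * Tlim) := by
  have per_set : ∀ I, ∀ a ∈ act I, ∑ t ∈ range T, r t I a
      ≤ Δ * Tlim + Δ * Real.sqrt (act I).card * Real.sqrt T := fun I a ha =>
    sum_range_le_of_warmup_add_sum_Ico hΔ (fun t ht => (abs_le.mp (hwarm t ht I a ha)).2)
      (hconv I a ha)
  refine ⟨per_set, ?_⟩
  have pos_part_le : ∀ I, max 0 ((act I).sup' (hact I) fun a => ∑ t ∈ range T, r t I a) ≤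
      Δ * Tlim + Δ * Real.sqrt Amax * Real.sqrt T :=
    fun I => max_le (by positivity) <| sup'_le _ _ fun a ha => (per_set I a ha).trans <| by
      gcongr; exact_mod_cast hAmax I
  have hRext : Rext ≤ Fintype.card Ii * (Δ * Tlim + Δ * Real.sqrt Amax * Real.sqrt T) := by
    simpa only [sum_const, card_univ, nsmul_eq_mul] using
      hext.trans (sum_le_sum fun I _ => pos_part_le I)
  rw [one_div_mul_eq_div]
  exact div_le_div_of_nonneg_right (hRext.trans_eq (by ring)) T.cast_nonneg

theorem stmt11 {Ii A : Type*} [Fintype Ii]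
    (act : Ii → Finset A) (hact : ∀ I, (act I).Nonempty)
    (Δ : ℝ) (hΔ : 0 ≤ Δ) (Amax : ℕ) (hAmax : ∀ I, (act I).card ≤ Amax)
    (T Tlim : ℕ) (hT : 0 < T) (hTlim : Tlim ≤ T)
    (r : ℕ → Ii → A → ℝ)
    (hwarm : ∀ t < Tlim, ∀ I, ∀ a ∈ act I, |r t I a| ≤ Δ)
    (hconv : ∀ I, ∀ a ∈ act I,
      ∑ t ∈ Finset.Ico Tlim T, r t I a ≤ Δ * Real.sqrt (act I).card * Real.sqrt T)
    (Rext : ℝ)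
    (hext : Rext ≤ ∑ I : Ii,
      max 0 ((act I).sup' (hact I) fun a => ∑ t ∈ Finset.range T, r t I a)) :
    (∀ I, ∀ a ∈ act I,
      ∑ t ∈ Finset.range T, r t I a ≤ Δ * Tlim + Δ * Real.sqrt (act I).card * Real.sqrt T) ∧
    Rext / T ≤ (1 / (T : ℝ)) *
      (Δ * (Fintype.card Ii) * Real.sqrt Amax * Real.sqrt T
        + Δ * (Fintype.card Ii) * Tlim) :=
  stmt11_general act hact Δ hΔ Amax hAmax T Tlim r hwarm hconv Rext hext
end

section
/- Consider the regret-matching⁺ update on two actions c, d under the symmetric alternation of Table 1, where the merged regret increments for (c,d) are (−11·b(d), 11·(1−b(d))) and (11·(1−b(c)), −11·b(c)) in alternating iterations (merged regrets summing contributions (0,1)+(0,10) and (10,1)+(0,0) from two merged sets). Then regret matching⁺ converges to the uniform strategy b(c) = b(d) = 1/2. -/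
/-!
STATEMENT 15 (the paper's counterexample for the heuristic-only update).
Regret matching⁺ on the two merged actions c, d (indexed 0 and 1): `Q t` are the
accumulated positive regrets, `b t` the current strategy.  The merged regret
increments alternate between (−11·b(d), 11·(1−b(d))) in one regime and
(11·(1−b(c)), −11·b(c)) in the other (Table 1 of the paper).  Under this
symmetric alternation regret matching⁺ converges to the uniform strategy
b(c) = b(d) = 1/2. -/
set_option maxHeartbeats 2000000 in
theorem stmt15 (Q b : ℕ → Fin 2 → ℝ)
    (hQ0 : ∀ a, Q 0 a = 0)
    (hb : ∀ t a, b t a =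
      if 0 < Q t 0 + Q t 1 then Q t a / (Q t 0 + Q t 1) else 1 / 2)
    -- regret matching⁺ update with the alternating merged increments
    (hQeven : ∀ t, t % 2 = 0 →
      Q (t + 1) 0 = max 0 (Q t 0 + (-11) * b t 1) ∧
      Q (t + 1) 1 = max 0 (Q t 1 + 11 * (1 - b t 1)))
    (hQodd : ∀ t, t % 2 = 1 →
      Q (t + 1) 0 = max 0 (Q t 0 + 11 * (1 - b t 0)) ∧
      Q (t + 1) 1 = max 0 (Q t 1 + (-11) * b t 0)) :
    Filter.Tendsto (fun t => b t 0) Filter.atTop (nhds (1 / 2)) ∧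
    Filter.Tendsto (fun t => b t 1) Filter.atTop (nhds (1 / 2)) := by
  -- Main invariant: for t = n+1, the sum s = Q t 0 + Q t 1 is ≥ 11/2,
  -- the difference is ±11/2 according to parity, and s² ≥ 121 n.
  have key : ∀ n : ℕ,
      (11/2 : ℝ) ≤ Q (n+1) 0 + Q (n+1) 1 ∧
      Q (n+1) 0 - Q (n+1) 1 = (if (n+1) % 2 = 1 then (-(11/2) : ℝ) else 11/2) ∧
      (121 : ℝ) * n ≤ (Q (n+1) 0 + Q (n+1) 1)^2 := by
    intro n
    induction n with
    | zero =>
      have hb01 : b 0 1 = 1/2 := by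
        rw [hb 0 1, if_neg]
        rw [hQ0 0, hQ0 1]; norm_num
      obtain ⟨h0, h1⟩ := hQeven 0 rfl
      rw [hQ0 0, hb01] at h0
      rw [hQ0 1, hb01] at h1
      rw [show ((0:ℝ) + -11 * (1/2)) = -(11/2) by norm_num,
        max_eq_left (by norm_num : (-(11/2):ℝ) ≤ 0)] at h0
      rw [show ((0:ℝ) + 11 * (1 - 1/2)) = 11/2 by norm_num,
        max_eq_right (by norm_num : (0:ℝ) ≤ 11/2)] at h1
      rw [h0, h1]
      norm_num
    | succ n ih =>
      obtain ⟨hs, hD, hsq⟩ := ih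
      set t := n + 1 with ht
      set s := Q t 0 + Q t 1 with hsdef
      clear_value s
      have hspos : (0:ℝ) < s := by linarith
      have hsne : s ≠ 0 := hspos.ne'
      have hb0 : b t 0 = Q t 0 / s := by rw [hb t 0, ← hsdef, if_pos hspos]
      have hb1 : b t 1 = Q t 1 / s := by rw [hb t 1, ← hsdef, if_pos hspos]
      have hexp : (s + 121/(2*s))^2 = s^2 + 121 + (121/(2*s))^2 := by
        field_simp; ring
      rcases Nat.mod_two_eq_zero_or_one t with h2 | h2
      · -- t even: difference is 11/2
        rw [if_neg (by omega)] at hD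
        have ha0 : Q t 0 = (s + 11/2)/2 := by rw [hsdef]; linarith
        have ha1 : Q t 1 = (s - 11/2)/2 := by rw [hsdef]; linarith
        have hQ0nn : (0:ℝ) ≤ Q t 0 := by rw [ha0]; linarith
        have hQ1nn : (0:ℝ) ≤ Q t 1 := by rw [ha1]; linarith
        obtain ⟨h0, h1⟩ := hQeven t h2
        rw [hb1] at h0 h1
        have hclip : (0:ℝ) ≤ Q t 0 + (-11) * (Q t 1 / s) := by
          have hkey : Q t 0 + (-11) * (Q t 1 / s)
              = (s^2 - (11/2)*s + 121/2) / (2*s) := by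
            rw [ha0, ha1]; field_simp; ring
          rw [hkey]
          apply div_nonneg
          · nlinarith [sq_nonneg (s - 11/4)]
          · linarith
        have e0 : Q (t+1) 0 = Q t 0 - 11 * (Q t 1 / s) := by
          rw [h0, max_eq_right hclip]; ring
        have e1 : Q (t+1) 1 = Q t 1 + 11 * (1 - Q t 1 / s) := by
          rw [h1, max_eq_right]
          have h1s : Q t 1 / s ≤ 1 := by rw [div_le_one hspos, ha1]; linarith
          linarith
        have hS : Q (t+1) 0 + Q (t+1) 1 = s + 121/(2*s) := by
          rw [e0, e1, ha0, ha1]; field_simp; ring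
        have hposc : (0:ℝ) < 121/(2*s) := by positivity
        refine ⟨by rw [hS]; linarith, ?_, ?_⟩
        · rw [if_pos (by omega : (t+1) % 2 = 1), e0, e1]
          linarith
        · rw [hS]
          push_cast
          rw [hexp]
          nlinarith [sq_nonneg (121/(2*s)), (by simp [ht] : ((t:ℕ):ℝ) = (n:ℝ) + 1)]
      · -- t odd: difference is -11/2
        rw [if_pos h2] at hD
        have ha0 : Q t 0 = (s - 11/2)/2 := by rw [hsdef]; linarith
        have ha1 : Q t 1 = (s + 11/2)/2 := by rw [hsdef]; linarith
        have hQ0nn : (0:ℝ) ≤ Q t 0 := by rw [ha0]; linarith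
        have hQ1nn : (0:ℝ) ≤ Q t 1 := by rw [ha1]; linarith
        obtain ⟨h0, h1⟩ := hQodd t h2
        rw [hb0] at h0 h1
        have hclip : (0:ℝ) ≤ Q t 1 + (-11) * (Q t 0 / s) := by
          have hkey : Q t 1 + (-11) * (Q t 0 / s)
              = (s^2 - (11/2)*s + 121/2) / (2*s) := by
            rw [ha0, ha1]; field_simp; ring
          rw [hkey]
          apply div_nonneg
          · nlinarith [sq_nonneg (s - 11/4)]
          · linarith
        have e1 : Q (t+1) 1 = Q t 1 - 11 * (Q t 0 / s) := by
          rw [h1, max_eq_right hclip]; ring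
        have e0 : Q (t+1) 0 = Q t 0 + 11 * (1 - Q t 0 / s) := by
          rw [h0, max_eq_right]
          have h0s : Q t 0 / s ≤ 1 := by rw [div_le_one hspos, ha0]; linarith
          linarith
        have hS : Q (t+1) 0 + Q (t+1) 1 = s + 121/(2*s) := by
          rw [e0, e1, ha0, ha1]; field_simp; ring
        have hposc : (0:ℝ) < 121/(2*s) := by positivity
        refine ⟨by rw [hS]; linarith, ?_, ?_⟩
        · rw [if_neg (by omega : ¬ (t+1) % 2 = 1), e0, e1]
          linarith
        · rw [hS]
          push_cast
          rw [hexp]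
          nlinarith [sq_nonneg (121/(2*s)), (by simp [ht] : ((t:ℕ):ℝ) = (n:ℝ) + 1)]
  -- distance bound: |b (n+1) 0 - 1/2| = 11 / (4 s)
  have hbnd : ∀ n : ℕ, |b (n+1) 0 - 1/2| = 11 / (4 * (Q (n+1) 0 + Q (n+1) 1)) := by
    intro n
    obtain ⟨hs, hD, -⟩ := key n
    set s := Q (n+1) 0 + Q (n+1) 1 with hsdef
    clear_value s
    have hspos : (0:ℝ) < s := by linarith
    have hb0 : b (n+1) 0 = Q (n+1) 0 / s := by rw [hb (n+1) 0, ← hsdef, if_pos hspos]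
    have hdiff : b (n+1) 0 - 1/2 = (Q (n+1) 0 - Q (n+1) 1) / (2 * s) := by
      rw [hb0]
      rw [show Q (n+1) 0 - Q (n+1) 1 = 2 * Q (n+1) 0 - s from by rw [hsdef]; ring]
      field_simp
    rw [hdiff, abs_div, abs_of_pos (by linarith : (0:ℝ) < 2 * s)]
    rcases Nat.mod_two_eq_zero_or_one (n+1) with h2 | h2
    · rw [if_neg (by omega)] at hD
      rw [hD, abs_of_nonneg (by norm_num : (0:ℝ) ≤ 11/2)]
      ring
    · rw [if_pos h2] at hD
      rw [hD, abs_neg, abs_of_nonneg (by norm_num : (0:ℝ) ≤ 11/2)]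
      ring
  have tend0 : Filter.Tendsto (fun t => b t 0) Filter.atTop (nhds (1 / 2)) := by
    rw [Metric.tendsto_atTop]
    intro ε hε
    obtain ⟨k, hk⟩ := exists_nat_gt (1 / (16 * ε^2))
    refine ⟨k + 1, fun n hn => ?_⟩
    match n, hn with
    | (m+1), hn =>
      obtain ⟨hs, -, hsq⟩ := key m
      rw [Real.dist_eq, hbnd m]
      set s := Q (m+1) 0 + Q (m+1) 1 with hsdef
      clear_value s
      have hspos : (0:ℝ) < s := by linarith
      have hmk : (k:ℝ) ≤ (m:ℝ) := by exact_mod_cast by omega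
      have hsq2 : (121:ℝ) / (16 * ε^2) < s^2 := by
        have h1 : (1:ℝ) / (16 * ε^2) < m := lt_of_lt_of_le hk hmk
        rw [show (121:ℝ)/(16*ε^2) = 121 * (1/(16*ε^2)) from by ring]
        linarith
      have h16 : (121:ℝ) < s^2 * (16 * ε^2) :=
        (div_lt_iff₀ (by positivity)).mp hsq2
      rw [div_lt_iff₀ (by linarith : (0:ℝ) < 4 * s)]
      nlinarith [h16, mul_pos hε hspos]
  refine ⟨tend0, ?_⟩
  have tend1 : Filter.Tendsto (fun t => 1 - b t 0) Filter.atTop (nhds (1 / 2)) := by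
    have h := (tendsto_const_nhds (x := (1:ℝ)) (f := Filter.atTop)).sub tend0
    norm_num at h
    exact h
  have heq : (fun t => 1 - b t 0) =ᶠ[Filter.atTop] (fun t => b t 1) := by
    rw [Filter.eventuallyEq_iff_exists_mem]
    refine ⟨Set.Ici 1, Filter.Ici_mem_atTop 1, fun n hn => ?_⟩
    obtain ⟨m, rfl⟩ := Nat.exists_eq_add_of_le hn
    obtain ⟨hs, -, -⟩ := key m
    show (1:ℝ) - b (1+m) 0 = b (1+m) 1
    have hspos : (0:ℝ) < Q (1+m) 0 + Q (1+m) 1 := by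
      rw [show 1 + m = m + 1 from by omega]; linarith
    rw [hb (1+m) 0, hb (1+m) 1, if_pos hspos, if_pos hspos]
    field_simp
    ring
  exact Filter.Tendsto.congr' heq tend1
end
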